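/- With K_α as above and ν = f μ for f ≥ 0 with μ(f) = 1, the relative entropy of the pushforwards satisfies H(νK_α | μK_α) = Σ_{A⊆V} α_A Ent_μ(μ_A f). Consequently, the α-entropy factorization with constant C_α is equivalent to the half-step contraction H(νK_α | μK_α) ≤ (1 − γ(α)/C_α) H(ν|μ) for all ν ∈ P(Ω). -/
import Mathlib


open Finset Matrix
open scoped Classical

noncomputable section

variable {V : Type*} [Fintype V] {q : ℕ}

/-- Entropy of a nonnegative function `f` with respect to the weights `μ`:
`Ent_μ f = μ(f log f) - μ(f) log μ(f)`. -/
def ent {X : Type*} [Fintype X] (μ f : X → ℝ) : ℝ :=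
  (∑ x, μ x * (f x * Real.log (f x))) - (∑ x, μ x * f x) * Real.log (∑ x, μ x * f x)

/-- The conditional measure `μ_A^τ`: `μ` conditioned on agreeing with `τ` outside `A`. -/
def condMeas (μ : (V → Fin q) → ℝ) (A : Finset V) (τ : V → Fin q) :
    (V → Fin q) → ℝ :=
  fun σ => (if ∀ i ∉ A, σ i = τ i then μ σ else 0) /
    (∑ σ', if ∀ i ∉ A, σ' i = τ i then μ σ' else 0)

/-- Conditional expectation `μ_A f : τ ↦ μ_A^τ(f)`. -/
def condExp (μ : (V → Fin q) → ℝ) (A : Finset V) (f : (V → Fin q) → ℝ) :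
    (V → Fin q) → ℝ :=
  fun τ => ∑ σ, condMeas μ A τ σ * f σ

/-- The conditional entropy `Ent_A f : τ ↦ Ent_{μ_A^τ} f`. -/
def entA (μ : (V → Fin q) → ℝ) (A : Finset V) (f : (V → Fin q) → ℝ) :
    (V → Fin q) → ℝ :=
  fun τ => ent (condMeas μ A τ) f

/-- Minimum covering probability `γ(α) = min_i Σ_{A ∋ i} α_A`. -/
def gam [Nonempty V] (α : Finset V → ℝ) : ℝ :=
  ⨅ i : V, ∑ A ∈ univ.filter (fun A => i ∈ A), α A

/-- Kullback–Leibler divergence of two weight functions on a finite set. -/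
def relEnt {X : Type*} [Fintype X] (p r : X → ℝ) : ℝ :=
  ∑ x, p x * Real.log (p x / r x)

/-- The kernel `K_α(σ,(A,η)) = α_A μ_A^σ(η)`. -/
def Kker (μ : (V → Fin q) → ℝ) (α : Finset V → ℝ) (σ : V → Fin q)
    (p : Finset V × (V → Fin q)) : ℝ :=
  α p.1 * condMeas μ p.1 σ p.2

/-- Pushforward of a measure `ν` on `Ω` through `K_α`. -/
def pushK (ν : (V → Fin q) → ℝ) (μ : (V → Fin q) → ℝ) (α : Finset V → ℝ)
    (p : Finset V × (V → Fin q)) : ℝ :=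
  ∑ σ, ν σ * Kker μ α σ p

section lemmas

variable (μ : (V → Fin q) → ℝ) (A : Finset V)

lemma Zpos (hμ : ∀ σ, 0 < μ σ) (τ : V → Fin q) :
    0 < ∑ σ' : V → Fin q, if ∀ i ∉ A, σ' i = τ i then μ σ' else 0 := by
  refine Finset.sum_pos' (fun σ _ => ?_) ⟨τ, Finset.mem_univ τ, ?_⟩
  · split <;> [exact (hμ _).le; rfl]
  · simpa using (hμ τ)

lemma condMeas_nonneg (hμ : ∀ σ, 0 < μ σ) (τ σ : V → Fin q) :
    0 ≤ condMeas μ A τ σ := by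
  unfold condMeas
  apply div_nonneg
  · split <;> [exact (hμ _).le; rfl]
  · exact (Zpos μ A hμ τ).le

lemma condMeas_sum (hμ : ∀ σ, 0 < μ σ) (τ : V → Fin q) :
    ∑ σ, condMeas μ A τ σ = 1 := by
  unfold condMeas
  rw [← Finset.sum_div]
  exact div_self (Zpos μ A hμ τ).ne'

lemma Z_congr {η τ : V → Fin q} (h : ∀ i ∉ A, η i = τ i) :
    (∑ σ' : V → Fin q, if ∀ i ∉ A, σ' i = η i then μ σ' else 0)
      = ∑ σ' : V → Fin q, if ∀ i ∉ A, σ' i = τ i then μ σ' else 0 := by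
  refine Finset.sum_congr rfl fun σ' _ => ?_
  refine if_congr ⟨fun h' i hi => (h' i hi).trans (h i hi),
    fun h' i hi => (h' i hi).trans (h i hi).symm⟩ rfl rfl

lemma reversible (hμ : ∀ σ, 0 < μ σ) (σ η : V → Fin q) :
    μ σ * condMeas μ A σ η = μ η * condMeas μ A η σ := by
  unfold condMeas
  by_cases h : ∀ i ∉ A, η i = σ i
  · have h' : ∀ i ∉ A, σ i = η i := fun i hi => (h i hi).symm
    rw [if_pos h, if_pos h', Z_congr μ A h]
    ring
  · have h' : ¬ ∀ i ∉ A, σ i = η i := fun hc => h fun i hi => (hc i hi).symm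
    rw [if_neg h, if_neg h']
    simp

lemma tower (hμ : ∀ σ, 0 < μ σ) (f : (V → Fin q) → ℝ) :
    ∑ τ, μ τ * condExp μ A f τ = ∑ σ, μ σ * f σ := by
  unfold condExp
  calc ∑ τ, μ τ * ∑ σ, condMeas μ A τ σ * f σ
      = ∑ τ, ∑ σ, (μ τ * condMeas μ A τ σ) * f σ := by
        simp [Finset.mul_sum, mul_assoc]
    _ = ∑ σ, ∑ τ, (μ σ * condMeas μ A σ τ) * f σ := by
        rw [Finset.sum_comm]
        exact Finset.sum_congr rfl fun σ _ => Finset.sum_congr rfl fun τ _ => by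
          rw [reversible μ A hμ τ σ]
    _ = ∑ σ, μ σ * f σ := by
        refine Finset.sum_congr rfl fun σ _ => ?_
        rw [← Finset.sum_mul, ← Finset.mul_sum, condMeas_sum μ A hμ σ, mul_one]

lemma pushK_apply (hμ : ∀ σ, 0 < μ σ) (α : Finset V → ℝ) (f : (V → Fin q) → ℝ)
    (η : V → Fin q) :
    pushK (fun σ => f σ * μ σ) μ α (A, η) = α A * (μ η * condExp μ A f η) := by
  unfold pushK Kker condExp
  rw [Finset.mul_sum, Finset.mul_sum]
  refine Finset.sum_congr rfl fun σ _ => ?_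
  have h := reversible μ A hμ σ η
  simp only
  linear_combination (α A * f σ) * h

lemma pushK_mu (hμ : ∀ σ, 0 < μ σ) (α : Finset V → ℝ) (η : V → Fin q) :
    pushK μ μ α (A, η) = α A * μ η := by
  unfold pushK Kker
  simp only
  have h1 : ∀ σ, μ σ * (α A * condMeas μ A σ η) = (α A * μ η) * condMeas μ A η σ :=
    fun σ => by linear_combination α A * reversible μ A hμ σ η
  rw [Finset.sum_congr rfl fun σ _ => h1 σ, ← Finset.mul_sum, condMeas_sum μ A hμ η, mul_one]



lemma ent_div {X : Type*} [Fintype X] (p f : X → ℝ) (hp : ∀ x, 0 ≤ p x)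
    (hf : ∀ x, 0 ≤ f x) (c : ℝ) (hc : 0 < c) :
    ent p (fun x => f x / c) = ent p f / c := by
  have hs : (0:ℝ) ≤ ∑ x, p x * f x :=
    Finset.sum_nonneg fun x _ => mul_nonneg (hp x) (hf x)
  have h1 : ∑ x, p x * (f x / c) = (∑ x, p x * f x) / c := by
    rw [Finset.sum_div]
    exact Finset.sum_congr rfl fun x _ => by ring
  have h2 : ∑ x, p x * ((f x / c) * Real.log (f x / c))
      = (∑ x, p x * (f x * Real.log (f x))) / c
        - ((∑ x, p x * f x) * Real.log c) / c := by
    calc ∑ x, p x * ((f x / c) * Real.log (f x / c))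
        = ∑ x, (p x * (f x * Real.log (f x)) / c - (p x * f x) * Real.log c / c) := by
          refine Finset.sum_congr rfl fun x _ => ?_
          rcases eq_or_lt_of_le (hf x) with h | h
          · simp [← h]
          · rw [Real.log_div h.ne' hc.ne']
            ring
      _ = _ := by
          rw [Finset.sum_sub_distrib, ← Finset.sum_div, ← Finset.sum_div, ← Finset.sum_mul]
  unfold ent
  rw [h1, h2]
  rcases eq_or_lt_of_le hs with h | h
  · rw [← h]
    simp
  · rw [Real.log_div h.ne' hc.ne']
    ring

lemma ent_decomp (hμ : ∀ σ, 0 < μ σ) (f : (V → Fin q) → ℝ) :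
    ent μ f = (∑ τ, μ τ * entA μ A f τ) + ent μ (condExp μ A f) := by
  have h1 := tower μ A hμ (fun σ => f σ * Real.log (f σ))
  have h2 := tower μ A hμ f
  simp only [entA, ent, condExp] at *
  simp only [mul_sub]
  rw [Finset.sum_sub_distrib, h1]
  ring_nf
  rw [h2]

lemma relEnt_self (hμ : ∀ σ, 0 < μ σ) (f : (V → Fin q) → ℝ) (hf : ∀ σ, 0 ≤ f σ) :
    relEnt (fun σ => f σ * μ σ) μ = ∑ σ, μ σ * (f σ * Real.log (f σ)) := by
  unfold relEnt
  refine Finset.sum_congr rfl fun σ _ => ?_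
  show f σ * μ σ * Real.log (f σ * μ σ / μ σ) = μ σ * (f σ * Real.log (f σ))
  rcases eq_or_lt_of_le (hf σ) with h | h
  · rw [← h]
    simp
  · have : f σ * μ σ / μ σ = f σ := by
      rw [mul_div_assoc, div_self (hμ σ).ne', mul_one]
    rw [this]
    ring

lemma part1 (hμ : ∀ σ, 0 < μ σ) (α : Finset V → ℝ) (f : (V → Fin q) → ℝ)
    (hf1 : ∑ σ, μ σ * f σ = 1) :
    relEnt (pushK (fun σ => f σ * μ σ) μ α) (pushK μ μ α)
      = ∑ A : Finset V, α A * ent μ (condExp μ A f) := by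
  unfold relEnt
  rw [Fintype.sum_prod_type]
  refine Finset.sum_congr rfl fun A _ => ?_
  have hg1 : ∑ η, μ η * condExp μ A f η = 1 := by rw [tower μ A hμ f, hf1]
  have hent : ent μ (condExp μ A f)
      = ∑ η, μ η * (condExp μ A f η * Real.log (condExp μ A f η)) := by
    unfold ent
    rw [hg1]
    simp
  rw [hent, Finset.mul_sum]
  refine Finset.sum_congr rfl fun η _ => ?_
  rw [pushK_apply μ A hμ α f η, pushK_mu μ A hμ α η]
  rcases eq_or_ne (α A) 0 with h | h
  · simp [h]
  · rcases eq_or_ne (condExp μ A f η) 0 with h0 | h0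
    · simp [h0]
    · have : α A * (μ η * condExp μ A f η) / (α A * μ η) = condExp μ A f η := by
        field_simp [(hμ η).ne']
      rw [this]
      ring

lemma entA_div (hμ : ∀ σ, 0 < μ σ) (f : (V → Fin q) → ℝ) (hf : ∀ σ, 0 ≤ f σ)
    (c : ℝ) (hc : 0 < c) (τ : V → Fin q) :
    entA μ A (fun σ => f σ / c) τ = entA μ A f τ / c :=
  ent_div (condMeas μ A τ) f (condMeas_nonneg μ A hμ τ) hf c hc

end lemmas


/-- `H(νK_α | μK_α) = Σ_A α_A Ent_μ(μ_A f)` for `ν = fμ`, and the equivalence of the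
`α`-entropy factorization with the half-step contraction
`H(νK_α|μK_α) ≤ (1 - γ(α)/C_α) H(ν|μ)`. -/
theorem halfStepContraction [Nonempty V]
    (μ : (V → Fin q) → ℝ) (α : Finset V → ℝ) (Cα : ℝ)
    (hμ : ∀ σ, 0 < μ σ) (hμ1 : ∑ σ, μ σ = 1)
    (hα : ∀ A, 0 ≤ α A) (hα1 : ∑ A : Finset V, α A = 1) (hC : 0 < Cα) :
    (∀ f : (V → Fin q) → ℝ, (∀ σ, 0 ≤ f σ) → (∑ σ, μ σ * f σ = 1) →
      relEnt (pushK (fun σ => f σ * μ σ) μ α) (pushK μ μ α)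
        = ∑ A : Finset V, α A * ent μ (condExp μ A f)) ∧
    ((∀ f : (V → Fin q) → ℝ, (∀ σ, 0 ≤ f σ) →
        gam α * ent μ f ≤ Cα * ∑ A : Finset V, α A * ∑ τ, μ τ * entA μ A f τ) ↔
      (∀ f : (V → Fin q) → ℝ, (∀ σ, 0 ≤ f σ) → (∑ σ, μ σ * f σ = 1) →
        relEnt (pushK (fun σ => f σ * μ σ) μ α) (pushK μ μ α)
          ≤ (1 - gam α / Cα) * relEnt (fun σ => f σ * μ σ) μ)) := by
  have hdecomp : ∀ f : (V → Fin q) → ℝ, (∑ σ, μ σ * f σ = 1) →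
      ent μ f = (∑ A : Finset V, α A * ∑ τ, μ τ * entA μ A f τ)
        + ∑ A : Finset V, α A * ent μ (condExp μ A f) := by
    intro f hf1
    calc ent μ f = ∑ A : Finset V, α A * ent μ f := by
          rw [← Finset.sum_mul, hα1, one_mul]
      _ = ∑ A : Finset V, α A * ((∑ τ, μ τ * entA μ A f τ) + ent μ (condExp μ A f)) :=
          Finset.sum_congr rfl fun A _ => by rw [← ent_decomp μ A hμ f]
      _ = _ := by
          simp only [mul_add]
          rw [Finset.sum_add_distrib]
  have hre : ∀ f : (V → Fin q) → ℝ, (∀ σ, 0 ≤ f σ) → (∑ σ, μ σ * f σ = 1) →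
      relEnt (fun σ => f σ * μ σ) μ = ent μ f := by
    intro f hf hf1
    rw [relEnt_self μ hμ f hf]
    unfold ent
    rw [hf1]
    simp
  refine ⟨fun f _ hf1 => part1 μ hμ α f hf1, ?_, ?_⟩
  · intro H f hf hf1
    rw [part1 μ hμ α f hf1, hre f hf hf1]
    have hd := hdecomp f hf1
    have hH := H f hf
    have h3 : gam α / Cα * ent μ f ≤ ∑ A : Finset V, α A * ∑ τ, μ τ * entA μ A f τ := by
      rw [div_mul_eq_mul_div, div_le_iff₀ hC]
      linarith
    have h4 : (1 - gam α / Cα) * ent μ f = ent μ f - gam α / Cα * ent μ f := by ring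
    rw [h4]
    linarith
  · intro H f hf
    set c : ℝ := ∑ σ, μ σ * f σ with hcdef
    have hc0 : 0 ≤ c := Finset.sum_nonneg fun σ _ => mul_nonneg (hμ σ).le (hf σ)
    rcases eq_or_lt_of_le hc0 with hc | hc
    · have hf0 : ∀ σ, f σ = 0 := by
        intro σ
        have h0 : ∀ i ∈ (Finset.univ : Finset (V → Fin q)), 0 ≤ μ i * f i :=
          fun i _ => mul_nonneg (hμ i).le (hf i)
        have := (Finset.sum_eq_zero_iff_of_nonneg h0).mp hc.symm σ (Finset.mem_univ σ)
        exact (mul_eq_zero.mp this).resolve_left (hμ σ).ne'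
      have hfz : f = fun _ => (0:ℝ) := funext hf0
      rw [hfz]
      simp [ent, entA]
    · set f' : (V → Fin q) → ℝ := fun σ => f σ / c with hf'def
      have hf' : ∀ σ, 0 ≤ f' σ := fun σ => div_nonneg (hf σ) hc0
      have hf'1 : ∑ σ, μ σ * f' σ = 1 := by
        have : ∑ σ, μ σ * f' σ = (∑ σ, μ σ * f σ) / c := by
          rw [Finset.sum_div]
          exact Finset.sum_congr rfl fun σ _ => by rw [hf'def]; ring
        rw [this, ← hcdef, div_self hc.ne']
      have key := H f' hf' hf'1
      rw [part1 μ hμ α f' hf'1, hre f' hf' hf'1] at key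
      have hd := hdecomp f' hf'1
      -- derive gam α * ent μ f' ≤ Cα * S'
      have h5 : gam α / Cα * ent μ f' ≤ ∑ A : Finset V, α A * ∑ τ, μ τ * entA μ A f' τ := by
        have h4 : (1 - gam α / Cα) * ent μ f' = ent μ f' - gam α / Cα * ent μ f' := by ring
        rw [h4] at key
        linarith
      have h6 : gam α * ent μ f' ≤ Cα * ∑ A : Finset V, α A * ∑ τ, μ τ * entA μ A f' τ := by
        rw [div_mul_eq_mul_div, div_le_iff₀ hC] at h5
        linarith
      -- scaling
      have he : ent μ f' = ent μ f / c := ent_div μ f (fun σ => (hμ σ).le) hf c hc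
      have hS : (∑ A : Finset V, α A * ∑ τ, μ τ * entA μ A f' τ)
          = (∑ A : Finset V, α A * ∑ τ, μ τ * entA μ A f τ) / c := by
        rw [Finset.sum_div]
        refine Finset.sum_congr rfl fun A _ => ?_
        rw [mul_div_assoc, Finset.sum_div]
        refine congrArg _ (Finset.sum_congr rfl fun τ _ => ?_)
        rw [entA_div μ A hμ f hf c hc τ, mul_div_assoc]
      rw [he, hS] at h6
      have := mul_le_mul_of_nonneg_right h6 hc0
      calc gam α * ent μ f = gam α * (ent μ f / c) * c := by
            field_simp
        _ ≤ Cα * ((∑ A : Finset V, α A * ∑ τ, μ τ * entA μ A f τ) / c) * c := this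
        _ = Cα * ∑ A : Finset V, α A * ∑ τ, μ τ * entA μ A f τ := by
            field_simp
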